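/- Tightness (asymptotic equicontinuity) of the scaled Gaussian input. Assume σ satisfies L1 and L2, and let δ : (0,∞) → (0,∞) satisfy u δ(u) = σ(δ(u)) for all large u and δ(u) → 0 as u → ∞. Then for every T > 0 and every η > 0: lim_{ζ↓0} limsup_{u→∞} ℙ( sup_{ s,t ∈ [−T,T], |t−s| ≤ ζ } | (J(δ(u)t) − J(δ(u)s))/σ(δ(u)) | ≥ η ) = 0. -/

import Mathlib

open MeasureTheory ProbabilityTheory Filter Topology

noncomputable section

/-- Covariance function of a centered Gaussian process with stationary increments
and standard deviation function `σ`: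
`Cov(J(t), J(s)) = (σ²(|t|) + σ²(|s|) − σ²(|t−s|))/2`. -/
def covFromStd (σ : ℝ → ℝ) : ℝ → ℝ → ℝ := fun t s =>
  (σ |t| ^ 2 + σ |s| ^ 2 - σ |t - s| ^ 2) / 2

/-- `X` is a real-valued centered Gaussian process (indexed by `ℝ`) with covariance
function `K`, under the measure `P`: every finite linear combination of its values is a
centered Gaussian real random variable with the variance prescribed by `K`. -/
def IsCenteredGaussian1 {Ω : Type*} [MeasurableSpace Ω] (P : Measure Ω)
    (X : ℝ → Ω → ℝ) (K : ℝ → ℝ → ℝ) : Prop :=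
  (∀ t, Measurable (X t)) ∧
  ∀ (k : ℕ) (t : Fin k → ℝ) (c : Fin k → ℝ),
    P.map (fun ω => ∑ a, c a * X (t a) ω)
      = gaussianReal 0 (∑ a, ∑ b, c a * c b * K (t a) (t b)).toNNReal

/-!
Dyadic chaining. By L1 there are `q < 1` and `M` with `σ (2T x / 2ⁿ) ≤ M qⁿ σ x` for all small `x`
and all `n`, so for all large `u` the increments of `t ↦ J (δ u * t) / σ (δ u)` between neighbouring
points of the `n`-th dyadic grid of `[-T, T]` are centred Gaussians with standard deviation at most
`M qⁿ`. With `θ = √q` and `c = η (1 - θ) / 4`, the Chernoff bound makes the probability that one of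
these `2ⁿ` increments reaches `c θⁿ` at most `2ⁿ · 2 exp (-c² / (2 M² qⁿ))`, which is summable in
`n`. Off these events for all `n ≥ m`, continuity of the paths lets the increments telescope, which
bounds the oscillation at distance `2T / 2ᵐ` by `3 c θᵐ / (1 - θ) < η`. Hence the limsup in `u` is
at most the tail of that series from `m` on, and this tends to `0` with `m`.
-/

open Set Real

lemma Nat.floor_two_mul_eq_or {y : ℝ} (hy : 0 ≤ y) :
    ⌊2 * y⌋₊ = 2 * ⌊y⌋₊ ∨ ⌊2 * y⌋₊ = 2 * ⌊y⌋₊ + 1 := by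
  have h₁ : 2 * ⌊y⌋₊ ≤ ⌊2 * y⌋₊ := Nat.le_floor (by push_cast; linarith [Nat.floor_le hy])
  have h₂ : ⌊2 * y⌋₊ < 2 * ⌊y⌋₊ + 2 :=
    (Nat.floor_lt (by positivity)).2 (by push_cast; linarith [Nat.lt_floor_add_one y])
  omega

lemma Nat.floor_two_pow_mul_le_two_pow {x : ℝ} (hx : x ≤ 1) (n : ℕ) : ⌊2 ^ n * x⌋₊ ≤ 2 ^ n :=
  Nat.floor_le_of_le (by push_cast; exact mul_le_of_le_one_right (by positivity) hx)

section DyadicChaining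

variable {f : ℝ → ℝ} {c θ : ℝ} {m : ℕ}

lemma abs_sub_nat_floor_div_le_of_dyadic_increments (hf : Continuous f) (hc : 0 ≤ c)
    (hθ0 : 0 ≤ θ) (hθ1 : θ < 1)
    (H : ∀ n ≥ m, ∀ k : ℕ, k < 2 ^ n → |f ((k + 1) / 2 ^ n) - f (k / 2 ^ n)| ≤ c * θ ^ n)
    {x : ℝ} (hx : x ∈ Icc 0 1) :
    |f (⌊2 ^ m * x⌋₊ / 2 ^ m) - f x| ≤ c * θ ^ m / (1 - θ) := by
  set u : ℕ → ℝ := fun j => f (⌊2 ^ (m + j) * x⌋₊ / 2 ^ (m + j))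
  have hstep : ∀ j, dist (u j) (u (j + 1)) ≤ c * θ ^ m * θ ^ j := by
    intro j
    obtain ⟨n, hn⟩ : ∃ n, m + j = n := ⟨_, rfl⟩
    have hmul : 2 ^ (n + 1) * x = 2 * (2 ^ n * x) := by ring
    have hhalf : ((2 * ⌊2 ^ n * x⌋₊ : ℕ) : ℝ) / 2 ^ (n + 1) = ⌊2 ^ n * x⌋₊ / 2 ^ n := by
      push_cast; field_simp; ring
    have hθn : c * θ ^ (n + 1) ≤ c * θ ^ m * θ ^ j := by
      rw [mul_assoc, ← pow_add, hn]
      exact mul_le_mul_of_nonneg_left (pow_le_pow_of_le_one hθ0 hθ1.le (by omega)) hc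
    simp only [u, ← add_assoc, hn, hmul, Real.dist_eq]
    rcases Nat.floor_two_mul_eq_or (y := 2 ^ n * x) (by have := hx.1; positivity) with h | h
    · rw [h, hhalf, sub_self, abs_zero]
      positivity
    · have hk : 2 * ⌊2 ^ n * x⌋₊ < 2 ^ (n + 1) := by
        have := Nat.floor_two_pow_mul_le_two_pow hx.2 (n + 1)
        rw [hmul, h] at this
        omega
      rw [h, ← hhalf, abs_sub_comm]
      exact_mod_cast (H (n + 1) (by omega) _ hk).trans hθn
  have hlim : Tendsto u atTop (𝓝 (f x)) := by
    refine (hf.tendsto x).comp ?_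
    have h2 : Tendsto (fun j : ℕ => (2 : ℝ) ^ (m + j)) atTop atTop :=
      ((tendsto_pow_atTop_atTop_of_one_lt one_lt_two).comp (tendsto_add_atTop_nat m)).congr
        fun j => by simp [add_comm]
    simpa [Function.comp_def, mul_comm] using (tendsto_nat_floor_mul_div_atTop hx.1).comp h2
  simpa [u, ← Real.dist_eq] using dist_le_of_le_geometric_of_tendsto₀ _ _ hθ1 hstep hlim

lemma abs_sub_le_of_dyadic_increments (hf : Continuous f) (hc : 0 ≤ c)
    (hθ0 : 0 ≤ θ) (hθ1 : θ < 1)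
    (H : ∀ n ≥ m, ∀ k : ℕ, k < 2 ^ n → |f ((k + 1) / 2 ^ n) - f (k / 2 ^ n)| ≤ c * θ ^ n)
    {x y : ℝ} (hx : x ∈ Icc 0 1) (hy : y ∈ Icc 0 1) (hxy : |x - y| ≤ 1 / 2 ^ m) :
    |f x - f y| ≤ 3 * c * θ ^ m / (1 - θ) := by
  wlog hle : x ≤ y generalizing x y
  · rw [abs_sub_comm]
    exact this hy hx (by rwa [abs_sub_comm]) (le_of_not_ge hle)
  have hmy : 2 ^ m * y ≤ 2 ^ m * x + 1 := by
    rw [abs_sub_comm, abs_of_nonneg (by linarith), le_div_iff₀ (by positivity)] at hxy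
    linarith
  have hfloor_le : ⌊2 ^ m * x⌋₊ ≤ ⌊2 ^ m * y⌋₊ := Nat.floor_le_floor (by gcongr)
  have hfloor_le_succ : ⌊2 ^ m * y⌋₊ ≤ ⌊2 ^ m * x⌋₊ + 1 := by
    have := Nat.floor_le_floor hmy
    rwa [Nat.floor_add_one (by have := hx.1; positivity)] at this
  have hgrid : |f (⌊2 ^ m * y⌋₊ / 2 ^ m) - f (⌊2 ^ m * x⌋₊ / 2 ^ m)| ≤ c * θ ^ m := by
    rcases (show ⌊2 ^ m * y⌋₊ = ⌊2 ^ m * x⌋₊ ∨ ⌊2 ^ m * y⌋₊ = ⌊2 ^ m * x⌋₊ + 1 by omega)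
      with h | h
    · rw [h, sub_self, abs_zero]
      positivity
    · have hk : ⌊2 ^ m * x⌋₊ < 2 ^ m := by
        have := Nat.floor_two_pow_mul_le_two_pow hy.2 m
        omega
      rw [h]
      exact_mod_cast H m le_rfl _ hk
  have hx' := abs_sub_nat_floor_div_le_of_dyadic_increments hf hc hθ0 hθ1 H hx
  have hy' := abs_sub_nat_floor_div_le_of_dyadic_increments hf hc hθ0 hθ1 H hy
  have hgrid' : c * θ ^ m ≤ c * θ ^ m / (1 - θ) :=
    le_div_self (by positivity) (by linarith) (by linarith)
  rw [abs_sub_comm] at hx' hgrid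
  have htri₁ := abs_sub_le (f x) (f (⌊2 ^ m * x⌋₊ / 2 ^ m)) (f y)
  have htri₂ := abs_sub_le (f (⌊2 ^ m * x⌋₊ / 2 ^ m)) (f (⌊2 ^ m * y⌋₊ / 2 ^ m)) (f y)
  rw [mul_assoc, mul_div_assoc]
  linarith

lemma abs_sub_le_of_dyadic_increments_Icc (hf : Continuous f) (hc : 0 ≤ c)
    (hθ0 : 0 ≤ θ) (hθ1 : θ < 1) {a b : ℝ} (hab : a < b)
    (H : ∀ n ≥ m, ∀ k : ℕ, k < 2 ^ n →
      |f (a + (b - a) * (k + 1) / 2 ^ n) - f (a + (b - a) * k / 2 ^ n)| ≤ c * θ ^ n)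
    {s t : ℝ} (hs : s ∈ Icc a b) (ht : t ∈ Icc a b) (hst : |s - t| ≤ (b - a) / 2 ^ m) :
    |f s - f t| ≤ 3 * c * θ ^ m / (1 - θ) := by
  have hba : 0 < b - a := sub_pos.2 hab
  have hunit : ∀ r ∈ Icc a b, (r - a) / (b - a) ∈ Icc 0 1 := fun r hr =>
    ⟨div_nonneg (by linarith [hr.1]) hba.le, (div_le_one hba).2 (by linarith [hr.2])⟩
  have hback : ∀ r, a + (b - a) * ((r - a) / (b - a)) = r := fun r => by field_simp; ring
  have key := abs_sub_le_of_dyadic_increments (f := fun x => f (a + (b - a) * x))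
    (by fun_prop) hc hθ0 hθ1 (fun n hn k hk => by simpa only [mul_div_assoc] using H n hn k hk)
    (hunit s hs) (hunit t ht) (by
      rw [← sub_div, sub_sub_sub_cancel_right, abs_div, abs_of_pos hba, div_le_iff₀ hba]
      rwa [one_div_mul_eq_div])
  simpa only [hback] using key

end DyadicChaining

section Chaining

variable {α : Type*} [MeasurableSpace α] {μ : Measure α} [IsFiniteMeasure μ]

lemma measureReal_iUnion_le_tsum_of_le {s : ℕ → Set α} {b : ℕ → ℝ}
    (hs : ∀ n, μ.real (s n) ≤ b n) (hb : Summable b) : μ.real (⋃ n, s n) ≤ ∑' n, b n := by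
  have hb0 : ∀ n, 0 ≤ b n := fun n => measureReal_nonneg.trans (hs n)
  refine ENNReal.toReal_le_of_le_ofReal (tsum_nonneg hb0) ?_
  calc μ (⋃ n, s n) ≤ ∑' n, μ (s n) := measure_iUnion_le s
    _ ≤ ∑' n, ENNReal.ofReal (b n) := ENNReal.tsum_le_tsum fun n => by
        rw [← ofReal_measureReal]
        exact ENNReal.ofReal_le_ofReal (hs n)
    _ = ENNReal.ofReal (∑' n, b n) := (ENNReal.ofReal_tsum_of_nonneg hb0 hb).symm

lemma measureReal_exists_abs_sub_gt_le {X : ℝ → α → ℝ} (hX : ∀ ω, Continuous fun x => X x ω)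
    {a b c θ : ℝ} (hab : a < b) (hc : 0 ≤ c) (hθ0 : 0 ≤ θ) (hθ1 : θ < 1) {p : ℕ → ℝ}
    (hp : ∀ n, ∀ k : ℕ, k < 2 ^ n → μ.real {ω | c * θ ^ n ≤
      |X (a + (b - a) * (k + 1) / 2 ^ n) ω - X (a + (b - a) * k / 2 ^ n) ω|} ≤ p n)
    (hsum : Summable fun n => 2 ^ n * p n) (m : ℕ) :
    μ.real {ω | ∃ s ∈ Icc a b, ∃ t ∈ Icc a b, |s - t| ≤ (b - a) / 2 ^ m ∧
      3 * c * θ ^ m / (1 - θ) < |X s ω - X t ω|} ≤ ∑' n, 2 ^ (n + m) * p (n + m) := by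
  set A : ℕ → ℕ → Set α := fun n k => {ω | c * θ ^ n ≤
    |X (a + (b - a) * (k + 1) / 2 ^ n) ω - X (a + (b - a) * k / 2 ^ n) ω|}
  have hsub : {ω | ∃ s ∈ Icc a b, ∃ t ∈ Icc a b, |s - t| ≤ (b - a) / 2 ^ m ∧
      3 * c * θ ^ m / (1 - θ) < |X s ω - X t ω|} ⊆ ⋃ n, ⋃ k : Fin (2 ^ (n + m)), A (n + m) k := by
    rintro ω ⟨s, hs, t, ht, hst, hgt⟩
    by_contra hω
    simp only [mem_iUnion, not_exists] at hω
    refine hgt.not_ge (abs_sub_le_of_dyadic_increments_Icc (hX ω) hc hθ0 hθ1 hab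
      (fun n hn k hk => ?_) hs ht hst)
    obtain ⟨j, rfl⟩ := Nat.exists_eq_add_of_le' hn
    have := hω j ⟨k, hk⟩
    simp only [A, mem_ofPred_eq, not_le] at this
    exact this.le
  refine (measureReal_mono hsub).trans
    (measureReal_iUnion_le_tsum_of_le (fun n => ?_) ((summable_nat_add_iff m).2 hsum))
  calc μ.real (⋃ k : Fin (2 ^ (n + m)), A (n + m) k)
      ≤ ∑ k : Fin (2 ^ (n + m)), μ.real (A (n + m) k) := measureReal_iUnion_fintype_le _
    _ ≤ ∑ _k : Fin (2 ^ (n + m)), p (n + m) := Finset.sum_le_sum fun k _ => hp _ _ k.2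
    _ = 2 ^ (n + m) * p (n + m) := by simp

end Chaining

section GaussianTail

variable {Ω : Type*} [MeasurableSpace Ω] {μ : Measure Ω}

lemma ProbabilityTheory.HasSubgaussianMGF.measureReal_le_abs_le [IsFiniteMeasure μ] {X : Ω → ℝ}
    {c : NNReal} (h : HasSubgaussianMGF X c μ) {ε : ℝ} (hε : 0 ≤ ε) :
    μ.real {ω | ε ≤ |X ω|} ≤ 2 * exp (-ε ^ 2 / (2 * c)) := by
  have hsub : {ω | ε ≤ |X ω|} ⊆ {ω | ε ≤ X ω} ∪ {ω | ε ≤ (-X) ω} := fun ω hω => by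
    simpa [le_abs] using hω
  calc μ.real {ω | ε ≤ |X ω|}
      ≤ μ.real {ω | ε ≤ X ω} + μ.real {ω | ε ≤ (-X) ω} :=
        (measureReal_mono hsub).trans (measureReal_union_le _ _)
    _ ≤ exp (-ε ^ 2 / (2 * c)) + exp (-ε ^ 2 / (2 * c)) :=
        add_le_add (h.measure_ge_le hε) (h.neg.measure_ge_le hε)
    _ = 2 * exp (-ε ^ 2 / (2 * c)) := by ring

lemma ProbabilityTheory.hasSubgaussianMGF_id_gaussianReal {v c : NNReal} (hvc : v ≤ c) :
    HasSubgaussianMGF id c (gaussianReal 0 v) where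
  integrable_exp_mul := integrable_exp_mul_gaussianReal
  mgf_le t := by
    simp only [mgf_id_gaussianReal, zero_mul, zero_add]
    gcongr

lemma IsCenteredGaussian1.map_sub_div {σ : ℝ → ℝ} (hσ0 : σ 0 = 0) {J : ℝ → Ω → ℝ}
    (hJ : IsCenteredGaussian1 μ J (covFromStd σ)) (t s : ℝ) {r : ℝ} (hr : r ≠ 0) :
    μ.map (fun ω => (J t ω - J s ω) / r) = gaussianReal 0 ((σ |t - s| / r) ^ 2).toNNReal := by
  have h := hJ.2 2 ![t, s] ![r⁻¹, -r⁻¹]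
  have hfun : (fun ω => ∑ i : Fin 2, ![r⁻¹, -r⁻¹] i * J (![t, s] i) ω)
      = fun ω => (J t ω - J s ω) / r := by
    funext ω
    simp only [Fin.sum_univ_two, Matrix.cons_val_zero, Matrix.cons_val_one,
      Matrix.cons_val_fin_one, neg_mul]
    field_simp
    ring
  have hvar : (∑ i : Fin 2, ∑ j : Fin 2,
      ![r⁻¹, -r⁻¹] i * ![r⁻¹, -r⁻¹] j * covFromStd σ (![t, s] i) (![t, s] j))
      = (σ |t - s| / r) ^ 2 := by
    simp only [Fin.sum_univ_two, Matrix.cons_val_zero, Matrix.cons_val_one,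
      covFromStd, sub_self, abs_zero, hσ0]
    rw [abs_sub_comm s t]
    field_simp
    ring
  rwa [hfun, hvar] at h

lemma IsCenteredGaussian1.measureReal_le_abs_sub_div_le [IsProbabilityMeasure μ]
    {σ : ℝ → ℝ} (hσ0 : σ 0 = 0) {J : ℝ → Ω → ℝ}
    (hJ : IsCenteredGaussian1 μ J (covFromStd σ)) {t s r S ε : ℝ} (hr : 0 < r)
    (hS : |σ (|t - s|)| ≤ S * r) (hε : 0 ≤ ε) :
    μ.real {ω | ε ≤ |(J t ω - J s ω) / r|} ≤ 2 * exp (-ε ^ 2 / (2 * S ^ 2)) := by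
  have hvar : ((σ |t - s| / r) ^ 2).toNNReal ≤ (S ^ 2).toNNReal := by
    refine Real.toNNReal_le_toNNReal ?_
    rw [← sq_abs, abs_div, abs_of_pos hr]
    exact pow_le_pow_left₀ (by positivity) ((div_le_iff₀ hr).2 hS) 2
  have hX : AEMeasurable (fun ω => (J t ω - J s ω) / r) μ :=
    (((hJ.1 t).sub (hJ.1 s)).div_const r).aemeasurable
  have hsubG := (HasSubgaussianMGF.id_map_iff hX).1
    (hJ.map_sub_div hσ0 t s hr.ne' ▸ hasSubgaussianMGF_id_gaussianReal hvar)
  simpa [Real.coe_toNNReal _ (sq_nonneg S)] using hsubG.measureReal_le_abs_le hε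

end GaussianTail

section RegularVariation

variable {σ : ℝ → ℝ}

lemma eventually_le_mul_of_tendsto_div (hσpos : ∀ x > 0, 0 < σ x) {t l M : ℝ}
    (h : Tendsto (fun x => σ (t * x) / σ x) (𝓝[>] 0) (𝓝 l)) (hlM : l < M) :
    ∀ᶠ x in 𝓝[>] 0, σ (t * x) ≤ M * σ x := by
  filter_upwards [h.eventually (gt_mem_nhds hlM), self_mem_nhdsWithin] with x hx hx0
  exact ((div_lt_iff₀ (hσpos x hx0)).1 hx).le

lemma le_pow_mul_of_le_mul_half {q x₀ : ℝ} (hq : 0 ≤ q)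
    (h : ∀ x ∈ Ioc 0 x₀, σ (x / 2) ≤ q * σ x) (n : ℕ) :
    ∀ x ∈ Ioc 0 x₀, σ (x / 2 ^ n) ≤ q ^ n * σ x := by
  induction n with
  | zero => simp
  | succ n ih =>
    intro x hx
    have hx2 : x / 2 ∈ Ioc 0 x₀ := ⟨by linarith [hx.1], by linarith [hx.1, hx.2]⟩
    calc σ (x / 2 ^ (n + 1)) = σ (x / 2 / 2 ^ n) := by rw [pow_succ', div_div]
      _ ≤ q ^ n * σ (x / 2) := ih _ hx2
      _ ≤ q ^ n * (q * σ x) := by gcongr; exact h x hx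
      _ = q ^ (n + 1) * σ x := by ring

lemma exists_le_pow_mul_of_tendsto_div_rpow (hσpos : ∀ x > 0, 0 < σ x) {lam : ℝ}
    (hlam : 0 < lam)
    (hL1 : ∀ t > (0:ℝ), Tendsto (fun x => σ (t * x) / σ x) (𝓝[>] 0) (𝓝 (t ^ lam)))
    {L : ℝ} (hL : 0 < L) :
    ∃ q ∈ Ioo (0:ℝ) 1, ∃ M > 0, ∀ᶠ x in 𝓝[>] 0, ∀ n : ℕ, σ (L * x / 2 ^ n) ≤ M * q ^ n * σ x := by
  obtain ⟨q, hq_gt, hq1⟩ :=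
    exists_between (Real.rpow_lt_one (by norm_num : (0:ℝ) ≤ 1 / 2) (by norm_num) hlam)
  have hq0 : 0 < q := (Real.rpow_pos_of_pos (by norm_num) _).trans hq_gt
  obtain ⟨x₀, hx₀, hhalf⟩ := mem_nhdsGT_iff_exists_Ioc_subset.1
    (eventually_le_mul_of_tendsto_div hσpos (hL1 (1 / 2) (by norm_num)) hq_gt)
  have hLx : ∀ᶠ x in 𝓝[>] (0:ℝ), L * x ≤ x₀ :=
    (((continuous_const_mul L).tendsto' 0 0 (mul_zero L)).mono_left nhdsWithin_le_nhds)
      |>.eventually (ge_mem_nhds hx₀)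
  refine ⟨q, ⟨hq0, hq1⟩, L ^ lam + 1, by positivity, ?_⟩
  filter_upwards [eventually_le_mul_of_tendsto_div hσpos (hL1 L hL) (lt_add_one _), hLx,
    self_mem_nhdsWithin] with x hM hx hx0 n
  calc σ (L * x / 2 ^ n) ≤ q ^ n * σ (L * x) :=
        le_pow_mul_of_le_mul_half hq0.le (fun y hy => by simpa [div_eq_inv_mul] using hhalf hy)
          n _ ⟨mul_pos hL hx0, hx⟩
    _ ≤ q ^ n * ((L ^ lam + 1) * σ x) := by gcongr
    _ = (L ^ lam + 1) * q ^ n * σ x := by ring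

end RegularVariation

lemma Real.exp_neg_le_factorial_div_pow {x : ℝ} (hx : 0 < x) (k : ℕ) :
    exp (-x) ≤ k.factorial / x ^ k :=
  calc exp (-x) = (exp x)⁻¹ := exp_neg x
    _ ≤ (x ^ k / k.factorial)⁻¹ := inv_anti₀ (by positivity) (pow_div_factorial_le_exp _ hx.le k)
    _ = k.factorial / x ^ k := inv_div _ _

lemma summable_two_pow_mul_exp_neg_div_pow {q D : ℝ} (hq0 : 0 < q) (hq1 : q < 1) (hD : 0 < D) :
    Summable fun n : ℕ => (2 : ℝ) ^ n * exp (-(D / q ^ n)) := by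
  obtain ⟨k, hk⟩ := exists_pow_lt_of_lt_one (by norm_num : (0:ℝ) < 1 / 2) hq1
  refine Summable.of_nonneg_of_le (fun n => by positivity) (fun n => ?_)
    ((summable_geometric_of_lt_one (by positivity) (by linarith : 2 * q ^ k < 1)).mul_left
      (k.factorial / D ^ k))
  calc 2 ^ n * exp (-(D / q ^ n)) ≤ 2 ^ n * (k.factorial / (D / q ^ n) ^ k) := by
        gcongr
        exact exp_neg_le_factorial_div_pow (by positivity) k
    _ = k.factorial / D ^ k * (2 * q ^ k) ^ n := by
        rw [div_pow, mul_pow, ← pow_mul, ← pow_mul, mul_comm n k]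
        field_simp

lemma tendsto_zero_of_forall_eventually_le {β : Type*} {l : Filter β} {g : β → ℝ} {b : ℕ → ℝ}
    (hb : Tendsto b atTop (𝓝 0)) (hg0 : ∀ᶠ x in l, 0 ≤ g x) (hgb : ∀ m, ∀ᶠ x in l, g x ≤ b m) :
    Tendsto g l (𝓝 0) := by
  refine tendsto_order.2 ⟨fun a ha => hg0.mono fun x hx => ha.trans_le hx, fun a ha => ?_⟩
  obtain ⟨m, hm⟩ := (hb.eventually (gt_mem_nhds ha)).exists
  exact (hgb m).mono fun x hx => hx.trans_lt hm

lemma limsup_nonneg_of_eventually_nonneg {β : Type*} {l : Filter β} [l.NeBot] {u : β → ℝ}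
    (hu : ∀ᶠ x in l, 0 ≤ u x) : 0 ≤ limsup u l := by
  rw [limsup_eq]
  exact Real.sInf_nonneg fun a ha =>
    let ⟨_, hx0, hxa⟩ := (hu.and ha).exists
    hx0.trans hxa

section ScaledGaussianInput

variable {Ω : Type*} [MeasurableSpace Ω] {P : Measure Ω} [IsProbabilityMeasure P]
  {σ : ℝ → ℝ} {J : ℝ → Ω → ℝ}

lemma measureReal_le_iSup_scaled_increment_le (hσ0 : σ 0 = 0) (hσpos : ∀ t > (0:ℝ), 0 < σ t)
    (hJcont : ∀ ω, Continuous fun t => J t ω) (hJ : IsCenteredGaussian1 P J (covFromStd σ))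
    {T η q M x ζ : ℝ} (hT : 0 < T) (hη : 0 < η) (hq : q ∈ Ioo 0 1) (hM : 0 < M) (hx : 0 < x)
    (hσx : ∀ n : ℕ, σ ((T - -T) * x / 2 ^ n) ≤ M * q ^ n * σ x) {m : ℕ}
    (hζ : ζ ≤ (T - -T) / 2 ^ m) :
    P.real {ω | η ≤ ⨆ p : {p : ℝ × ℝ // p.1 ∈ Icc (-T) T ∧ p.2 ∈ Icc (-T) T ∧ |p.2 - p.1| ≤ ζ},
        |(J (x * p.1.2) ω - J (x * p.1.1) ω) / σ x|} ≤
      ∑' n, 2 ^ (n + m) * (2 * exp (-((η * (1 - √q) / 4) ^ 2 / (2 * M ^ 2) / q ^ (n + m)))) := by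
  set θ := √q with hθ
  set c := η * (1 - θ) / 4 with hc
  set D := c ^ 2 / (2 * M ^ 2) with hD
  have hθ1 : θ < 1 := by rw [hθ, Real.sqrt_lt' one_pos, one_pow]; exact hq.2
  have hθsq : θ ^ 2 = q := Real.sq_sqrt hq.1.le
  have hc0 : 0 < c := div_pos (mul_pos hη (sub_pos.2 hθ1)) four_pos
  have hD0 : 0 < D := div_pos (pow_pos hc0 2) (by positivity)
  have hσx0 : 0 < σ x := hσpos x hx
  have hL : 0 < T - -T := by linarith
  have hp : ∀ n, ∀ k : ℕ, k < 2 ^ n → P.real {ω | c * θ ^ n ≤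
      |J (x * (-T + (T - -T) * (k + 1) / 2 ^ n)) ω / σ x
        - J (x * (-T + (T - -T) * k / 2 ^ n)) ω / σ x|} ≤ 2 * exp (-(D / q ^ n)) := by
    intro n k _
    have hgap : |x * (-T + (T - -T) * (k + 1) / 2 ^ n) - x * (-T + (T - -T) * k / 2 ^ n)|
        = (T - -T) * x / 2 ^ n := by
      rw [abs_of_pos (by ring_nf; positivity)]
      ring
    have hexp : -(c * θ ^ n) ^ 2 / (2 * (M * q ^ n) ^ 2) = -(D / q ^ n) := by
      rw [mul_pow, ← pow_mul, mul_comm n 2, pow_mul, hθsq, hD]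
      field_simp
    simp_rw [← hexp, ← sub_div]
    have hS : |σ (|x * (-T + (T - -T) * (k + 1) / 2 ^ n) - x * (-T + (T - -T) * k / 2 ^ n)|)|
        ≤ M * q ^ n * σ x := by
      rw [hgap, abs_of_pos (hσpos _ (div_pos (mul_pos hL hx) (by positivity)))]
      exact hσx n
    exact hJ.measureReal_le_abs_sub_div_le hσ0 hσx0 hS
      (mul_nonneg hc0.le (pow_nonneg (Real.sqrt_nonneg q) n))
  have hsum : Summable fun n : ℕ => 2 ^ n * (2 * exp (-(D / q ^ n))) :=
    ((summable_two_pow_mul_exp_neg_div_pow hq.1 hq.2 hD0).mul_left 2).congr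
      fun n => by ring
  refine (measureReal_mono fun ω hω => ?_).trans (measureReal_exists_abs_sub_gt_le
    (X := fun t ω => J (x * t) ω / σ x) (fun ω => by fun_prop) (by linarith : -T < T)
    hc0.le (Real.sqrt_nonneg q) hθ1 hp hsum m)
  replace hω : η ≤ ⨆ p : {p : ℝ × ℝ // p.1 ∈ Icc (-T) T ∧ p.2 ∈ Icc (-T) T ∧ |p.2 - p.1| ≤ ζ},
      |(J (x * p.1.2) ω - J (x * p.1.1) ω) / σ x| := hω
  rcases isEmpty_or_nonempty {p : ℝ × ℝ // p.1 ∈ Icc (-T) T ∧ p.2 ∈ Icc (-T) T ∧ |p.2 - p.1| ≤ ζ}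
    with hempty | hne
  · rw [Real.iSup_of_isEmpty] at hω
    linarith
  have hlt : 3 * c * θ ^ m / (1 - θ) < η :=
    calc 3 * c * θ ^ m / (1 - θ) ≤ 3 * c / (1 - θ) :=
          div_le_div_of_nonneg_right (mul_le_of_le_one_right (by positivity)
            (pow_le_one₀ (Real.sqrt_nonneg q) hθ1.le)) (by linarith)
      _ = 3 * η / 4 := by rw [hc]; field_simp [(sub_pos.2 hθ1).ne']
      _ < η := by linarith
  obtain ⟨⟨⟨t, s⟩, ht, hs, hst⟩, hgt⟩ := exists_lt_of_lt_ciSup (hlt.trans_le hω)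
  exact ⟨s, hs, t, ht, hst.trans hζ, by rwa [← sub_div]⟩

end ScaledGaussianInput

theorem tightness_scaled_gaussian_input_general
    {Ω : Type*} [MeasurableSpace Ω] (P : Measure Ω) [IsProbabilityMeasure P]
    (σ : ℝ → ℝ) (hσ0 : σ 0 = 0)
    (hσpos : ∀ t > (0:ℝ), 0 < σ t)
    (J : ℝ → Ω → ℝ) (hJcont : ∀ ω, Continuous fun t => J t ω)
    (hJgauss : IsCenteredGaussian1 P J (covFromStd σ))
    -- assumption L1
    (lam : ℝ) (hlam : lam ∈ Set.Ioo (0:ℝ) 1)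
    (hL1 : ∀ t > (0:ℝ), Tendsto (fun x => σ (t * x) / σ x) (𝓝[>] 0) (𝓝 (t ^ lam)))
    -- the scaling function δ
    (δ : ℝ → ℝ)
    (hδ : ∀ᶠ u in atTop, 0 < δ u ∧ u * δ u = σ (δ u))
    (hδ0 : Tendsto δ atTop (𝓝 0)) :
    ∀ T > (0:ℝ), ∀ η > (0:ℝ),
      Tendsto (fun ζ : ℝ =>
          limsup (fun u =>
            (P {ω | η ≤
                ⨆ p : {p : ℝ × ℝ // p.1 ∈ Set.Icc (-T) T ∧ p.2 ∈ Set.Icc (-T) T ∧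
                    |p.2 - p.1| ≤ ζ},
                  |(J (δ u * p.1.2) ω - J (δ u * p.1.1) ω) / σ (δ u)|}).toReal) atTop)
        (𝓝[>] 0) (𝓝 0) := by
  intro T hT η hη
  have hL : 0 < T - -T := by linarith
  obtain ⟨q, hq, M, hM, hσq⟩ := exists_le_pow_mul_of_tendsto_div_rpow hσpos hlam.1 hL1 hL
  have hδ' : Tendsto δ atTop (𝓝[>] 0) := tendsto_nhdsWithin_iff.2 ⟨hδ0, hδ.mono fun _ h => h.1⟩
  refine tendsto_zero_of_forall_eventually_le (tendsto_sum_nat_add fun n =>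
      2 ^ n * (2 * exp (-((η * (1 - √q) / 4) ^ 2 / (2 * M ^ 2) / q ^ n))))
    (Eventually.of_forall fun ζ => limsup_nonneg_of_eventually_nonneg
      (Eventually.of_forall fun u => ENNReal.toReal_nonneg)) fun m => ?_
  filter_upwards [Ioo_mem_nhdsGT (div_pos hL (pow_pos two_pos m))] with ζ hζ
  refine limsup_le_of_le (isCoboundedUnder_le_of_le atTop fun u => ENNReal.toReal_nonneg) ?_
  filter_upwards [hδ' self_mem_nhdsWithin, hδ'.eventually hσq] with u hu hσu
  exact measureReal_le_iSup_scaled_increment_le hσ0 hσpos hJcont hJgauss hT hη hq hM hu hσu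
    hζ.2.le

/-- **Tightness (asymptotic equicontinuity) of the scaled Gaussian input.** Under L1
and L2, with `δ` solving `u δ(u) = σ(δ(u))` for all large `u` and `δ(u) → 0`, for every
`T > 0` and `η > 0`:
`limsup_{u→∞} ℙ( sup_{s,t ∈ [−T,T], |t−s| ≤ ζ} |(J(δ(u)t) − J(δ(u)s))/σ(δ(u))| ≥ η )`
tends to `0` as `ζ ↓ 0`. -/
theorem tightness_scaled_gaussian_input
    {Ω : Type*} [MeasurableSpace Ω] (P : Measure Ω) [IsProbabilityMeasure P]
    (σ : ℝ → ℝ) (hσcont : ContinuousOn σ (Set.Ici 0)) (hσ0 : σ 0 = 0)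
    (hσpos : ∀ t > (0:ℝ), 0 < σ t)
    (J : ℝ → Ω → ℝ) (hJcont : ∀ ω, Continuous fun t => J t ω)
    (hJ0 : ∀ ω, J 0 ω = 0)
    (hJgauss : IsCenteredGaussian1 P J (covFromStd σ))
    -- assumption L1
    (lam : ℝ) (hlam : lam ∈ Set.Ioo (0:ℝ) 1)
    (hL1 : ∀ t > (0:ℝ), Tendsto (fun x => σ (t * x) / σ x) (𝓝[>] 0) (𝓝 (t ^ lam)))
    -- assumption L2
    (t₀ β C : ℝ) (ht₀ : 0 < t₀) (hβ : β ∈ Set.Ioo (0:ℝ) 1) (hC : 0 < C)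
    (hL2 : ∀ t > t₀, σ t ≤ C * t ^ β)
    -- the scaling function δ
    (δ : ℝ → ℝ)
    (hδ : ∀ᶠ u in atTop, 0 < δ u ∧ u * δ u = σ (δ u))
    (hδ0 : Tendsto δ atTop (𝓝 0)) :
    ∀ T > (0:ℝ), ∀ η > (0:ℝ),
      Tendsto (fun ζ : ℝ =>
          limsup (fun u =>
            (P {ω | η ≤
                ⨆ p : {p : ℝ × ℝ // p.1 ∈ Set.Icc (-T) T ∧ p.2 ∈ Set.Icc (-T) T ∧
                    |p.2 - p.1| ≤ ζ},
                  |(J (δ u * p.1.2) ω - J (δ u * p.1.1) ω) / σ (δ u)|}).toReal) atTop)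
        (𝓝[>] 0) (𝓝 0) :=
  tightness_scaled_gaussian_input_general P σ hσ0 hσpos J hJcont hJgauss lam hlam hL1 δ hδ hδ0
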